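/- For each integer n ≥ 2, one has F_{n-1,n}(w) = G_{n-1}(w+x) / (w(w+(n-1)z)). -/

import Mathlib

open Finset MvPolynomial

noncomputable section

/-- The field of rational functions in three variables `w, x, z` over `ℚ`. -/
abbrev F3 : Type := FractionRing (MvPolynomial (Fin 3) ℚ)

/-- the variable `w` -/
def W : F3 := algebraMap (MvPolynomial (Fin 3) ℚ) F3 (X 0)
/-- the variable `x` -/
def Xv : F3 := algebraMap (MvPolynomial (Fin 3) ℚ) F3 (X 1)
/-- the variable `z` -/
def Zv : F3 := algebraMap (MvPolynomial (Fin 3) ℚ) F3 (X 2)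

/-- `G_n(w)`, defined by `G_1(w) = 1/w` and, for `n ≥ 2`,
`G_n(w) = ∑_{k=1}^{n-1} G_k(w) G_{n-k}(w+kz) / (w+(n-1)x)`. -/
def G : ℕ → F3 → F3
  | 0, _ => 0
  | 1, w => 1 / w
  | (n + 2), w =>
      ∑ k ∈ (Finset.Icc 1 (n + 1)).attach,
        G k.1 w * G (n + 2 - k.1) (w + (k.1 : F3) * Zv) / (w + ((n + 1 : ℕ) : F3) * Xv)
  termination_by n _ => n
  decreasing_by
  · have := Finset.mem_Icc.mp k.2; omega
  · have := Finset.mem_Icc.mp k.2; omega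

/-- `F_{k,n}(w)` for `1 ≤ k < n`, defined by `F_{1,n}(w) = G_n(w)` and, for `k ≥ 2`,
`F_{k,n}(w) = ∑_{i=1}^{n-k-1} G_{n-k-i}(w+(k+i)z) F_{k,k+i}(w) / (w+(n-1)x)
  + ∑_{i=1}^{k-1} (w+iz) G_i(w+x) F_{k-i,n-i}(w+iz) / (w(w+(n-1)x))`. -/
def Fkn : ℕ → ℕ → F3 → F3
  | 0, _, _ => 0
  | 1, n, w => G n w
  | (j + 2), n, w =>
      (∑ i ∈ (Finset.Icc 1 (n - (j + 2) - 1)).attach,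
        G (n - (j + 2) - i.1) (w + (((j + 2) + i.1 : ℕ) : F3) * Zv) * Fkn (j + 2) ((j + 2) + i.1) w /
          (w + ((n - 1 : ℕ) : F3) * Xv)) +
      ∑ i ∈ (Finset.Icc 1 (j + 1)).attach,
        (w + (i.1 : F3) * Zv) * G i.1 (w + Xv) * Fkn ((j + 2) - i.1) (n - i.1) (w + (i.1 : F3) * Zv) /
          (w * (w + ((n - 1 : ℕ) : F3) * Xv))
  termination_by k n _ => k + n
  decreasing_by
  · have := Finset.mem_Icc.mp i.2; omega
  · have := Finset.mem_Icc.mp i.2; omega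

/-! For `k = n - 1` the first sum in the recursion for `F_{k,n}` is empty. Substituting, by
strong induction on `k`, `F_{k-i,k-i+1}(w+iz) = G_{k-i}(w+iz+x) / ((w+iz)(w+kz))` into the second
sum, the factor `w + iz` cancels and what is left is the recursion defining `G_k(w+x)`, divided by
`w(w+kz)`. The induction therefore runs over all shifts `w + iz` of `w`, and needs them nonzero. -/

lemma G_add_two (n : ℕ) (w : F3) :
    G (n + 2) w = ∑ k ∈ Icc 1 (n + 1),
      G k w * G (n + 2 - k) (w + k * Zv) / (w + ((n + 1 : ℕ) : F3) * Xv) := by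
  rw [G]
  exact sum_attach (Icc 1 (n + 1)) fun k ↦
    G k w * G (n + 2 - k) (w + k * Zv) / (w + ((n + 1 : ℕ) : F3) * Xv)

lemma Fkn_add_two_add_three (j : ℕ) (w : F3) :
    Fkn (j + 2) (j + 3) w = ∑ i ∈ Icc 1 (j + 1),
      (w + i * Zv) * G i (w + Xv) * Fkn (j + 2 - i) (j + 3 - i) (w + i * Zv) /
        (w * (w + ((j + 2 : ℕ) : F3) * Xv)) := by
  rw [Fkn, sum_attach (Icc 1 (j + 1)) fun i ↦
    (w + i * Zv) * G i (w + Xv) * Fkn (j + 2 - i) (j + 3 - i) (w + i * Zv) /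
      (w * (w + ((j + 3 - 1 : ℕ) : F3) * Xv)),
    sum_eq_zero fun i _ ↦ absurd (mem_Icc.mp i.2) (by omega), zero_add]
  rfl

lemma W_add_natCast_mul_Zv_ne_zero (m : ℕ) : W + m * Zv ≠ 0 := by
  have hpoly : (X 0 + (m : MvPolynomial (Fin 3) ℚ) * X 2) ≠ 0 := fun h ↦ by
    simpa using congrArg (eval fun i : Fin 3 ↦ if i = 0 then (1 : ℚ) else 0) h
  simpa [W, Zv] using
    (map_ne_zero_iff _ (IsFractionRing.injective (MvPolynomial (Fin 3) ℚ) F3)).mpr hpoly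

theorem Fkn_self_succ (k : ℕ) (w : F3) (hw : ∀ i : ℕ, 0 < i → w + i * Zv ≠ 0) :
    Fkn k (k + 1) w = G k (w + Xv) / (w * (w + k * Zv)) := by
  induction k using Nat.strong_induction_on generalizing w with
  | _ k ih =>
  match k with
  | 0 => simp [Fkn, G]
  | 1 =>
    simp only [Fkn, G_add_two, Icc_self, sum_singleton, Nat.reduceAdd, Nat.reduceSub, G.eq_2,
      Nat.cast_one, one_mul, div_eq_mul_inv, mul_inv]
    ring
  | j + 2 =>
    rw [Fkn_add_two_add_three, G_add_two, sum_div]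
    refine sum_congr rfl fun i hi ↦ ?_
    obtain ⟨hi1, hi2⟩ := mem_Icc.mp hi
    have hshift : ∀ l : ℕ, 0 < l → w + i * Zv + l * Zv ≠ 0 := fun l hl ↦ by
      simpa [add_assoc, add_mul] using hw (i + l) (by omega)
    have hsub : j + 3 - i = j + 2 - i + 1 := by omega
    rw [hsub, ih (j + 2 - i) (by omega) _ hshift]
    have hcancel : w + i * Zv ≠ 0 := by simpa using hw i (by omega)
    have hz : w + i * Zv + ((j + 2 - i : ℕ) : F3) * Zv = w + ((j + 2 : ℕ) : F3) * Zv := by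
      rw [Nat.cast_sub (by omega)]; ring
    have hx : w + Xv + ((j + 1 : ℕ) : F3) * Xv = w + ((j + 2 : ℕ) : F3) * Xv := by
      push_cast; ring
    rw [hz, hx, add_right_comm w (i * Zv) Xv]
    field_simp

theorem F_pred_n_general (n : ℕ) :
    Fkn (n - 1) n W = G (n - 1) (W + Xv) / (W * (W + ((n - 1 : ℕ) : F3) * Zv)) := by
  rcases n with _ | k
  · simp [Fkn, G]
  · exact Fkn_self_succ k W fun i _ ↦ W_add_natCast_mul_Zv_ne_zero i

/-- For each `n ≥ 2`, `F_{n-1,n}(w) = G_{n-1}(w+x) / (w(w+(n-1)z))`. -/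
theorem F_pred_n (n : ℕ) (hn : 2 ≤ n) :
    Fkn (n - 1) n W = G (n - 1) (W + Xv) / (W * (W + ((n - 1 : ℕ) : F3) * Zv)) :=
  F_pred_n_general n

end
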